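/- With M^{-1} = min_{z ∈ l₁} u(z), the solution u of the Dirichlet problem in D₀ satisfies u(2z) ≤ M·u(z) for all z ∈ D₁; equivalently, u(z) ≤ M·u(z/2) for all z ∈ D₀. -/

import Mathlib

/-
STATEMENT 8: With M⁻¹ = min_{z ∈ l₁} u(z), the solution u of the Dirichlet problem
in D₀ satisfies u(2z) ≤ M·u(z) for all z ∈ D₁; equivalently u(z) ≤ M·u(z/2) for
all z ∈ D₀, where D₁ = {z : 0 < Im z < 2/3} \ ⋃_{n,k} S⁺_{n,k}.
-/
noncomputable section

open Set

/-- γ_{n,k}(z) = 2^{−n}(z + k). -/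
def gammaMap (n : ℕ) (k : ℤ) (z : ℂ) : ℂ := (2 : ℂ) ^ (-(n : ℤ)) * (z + (k : ℂ))

/-- The square S⁺_{0,0} = {z : |Re z| ≤ 3/10, |Im z − 1| ≤ 3/10}. -/
def Sp00 : Set ℂ := {z : ℂ | |z.re| ≤ 3 / 10 ∧ |z.im - 1| ≤ 3 / 10}

/-- S⁺_{n,k} = γ_{n,k}(S⁺_{0,0}). -/
def Sp (n : ℕ) (k : ℤ) : Set ℂ := gammaMap n k '' Sp00

/-- D₀ = {z : 0 < Im z < 4/3} \ ⋃_{n,k} S⁺_{n,k}. -/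
def D0 : Set ℂ := {z : ℂ | 0 < z.im ∧ z.im < 4 / 3} \ ⋃ (n : ℕ), ⋃ (k : ℤ), Sp n k

/-- The line l₀ = {z : Im z = 4/3}. -/
def l0 : Set ℂ := {z : ℂ | z.im = 4 / 3}

/-- The line l₁ = {z : Im z = 2/3}. -/
def l1 : Set ℂ := {z : ℂ | z.im = 2 / 3}

/-- A continuous function is harmonic on an open set iff it satisfies the mean
value property on every closed disk contained in the set; we take this as the
definition of harmonicity. -/
def IsHarmonicOn (u : ℂ → ℝ) (U : Set ℂ) : Prop :=
  ContinuousOn u U ∧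
  ∀ z ∈ U, ∀ ρ : ℝ, 0 < ρ → Metric.closedBall z ρ ⊆ U →
    u z = (1 / (2 * Real.pi)) *
      ∫ θ in (0:ℝ)..(2 * Real.pi), u (z + ρ * Complex.exp (θ * Complex.I))

/-- `u` solves the Dirichlet problem in D₀: it is bounded on the closure of D₀,
continuous there, harmonic in D₀, equal to 1 on l₀ and equal to 0 on ∂D₀ \ l₀. -/
def IsDirichletSol (u : ℂ → ℝ) : Prop :=
  (∃ C : ℝ, ∀ z ∈ closure D0, |u z| ≤ C) ∧
  ContinuousOn u (closure D0) ∧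
  IsHarmonicOn u D0 ∧
  (∀ z ∈ l0, u z = 1) ∧
  (∀ z ∈ frontier D0 \ l0, u z = 0)

/-- D₁ = {z : 0 < Im z < 2/3} \ ⋃_{n,k} S⁺_{n,k}. -/
def D1 : Set ℂ := {z : ℂ | 0 < z.im ∧ z.im < 2 / 3} \ ⋃ (n : ℕ), ⋃ (k : ℤ), Sp n k

lemma mem_Sp_iff {n : ℕ} {k : ℤ} {z : ℂ} :
    z ∈ Sp n k ↔ |(2:ℝ)^n * z.re - k| ≤ 3/10 ∧ |(2:ℝ)^n * z.im - 1| ≤ 3/10 := by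
  have hne : ((2:ℝ)^n) ≠ 0 := by positivity
  have hc : ((2:ℂ) ^ (-(n:ℤ))) = ((((2:ℝ)^n)⁻¹ : ℝ) : ℂ) := by
    rw [zpow_neg, zpow_natCast]
    push_cast
    norm_num
  constructor
  · rintro ⟨w, ⟨h1, h2⟩, rfl⟩
    rw [gammaMap, hc]
    rw [Complex.re_ofReal_mul, Complex.im_ofReal_mul]
    constructor
    · have : (2:ℝ)^n * ((2 ^ n)⁻¹ * (w + (k:ℂ)).re) - k = w.re := by
        simp only [Complex.add_re, Complex.intCast_re]
        field_simp
        ring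
      rw [this]; exact h1
    · have : (2:ℝ)^n * ((2 ^ n)⁻¹ * (w + (k:ℂ)).im) - 1 = w.im - 1 := by
        simp only [Complex.add_im, Complex.intCast_im, add_zero]
        field_simp
      rw [this]; exact h2
  · rintro ⟨h1, h2⟩
    refine ⟨((2:ℝ)^n : ℝ) * z - k, ⟨?_, ?_⟩, ?_⟩
    · simp only [Complex.sub_re, Complex.re_ofReal_mul, Complex.intCast_re]
      exact h1
    · simp only [Complex.sub_im, Complex.im_ofReal_mul, Complex.intCast_im, sub_zero]
      exact h2
    · rw [gammaMap, hc]
      push_cast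
      have : ((2:ℝ)^n : ℂ) ≠ 0 := by exact_mod_cast Complex.ofReal_ne_zero.mpr hne
      field_simp
      ring

def An (n : ℕ) : Set ℂ :=
  {z : ℂ | (∃ k : ℤ, |(2:ℝ)^n * z.re - k| ≤ 3/10) ∧ |(2:ℝ)^n * z.im - 1| ≤ 3/10}

lemma iUnion_Sp_eq : (⋃ (n : ℕ), ⋃ (k : ℤ), Sp n k) = ⋃ n, An n := by
  ext z
  simp only [mem_iUnion, mem_Sp_iff, An, mem_setOf_eq]
  constructor
  · rintro ⟨n, k, h1, h2⟩; exact ⟨n, ⟨k, h1⟩, h2⟩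
  · rintro ⟨n, ⟨k, h1⟩, h2⟩; exact ⟨n, k, h1, h2⟩

lemma isClosed_dist_int : IsClosed {t : ℝ | ∃ k : ℤ, |t - k| ≤ 3/10} := by
  rw [← isOpen_compl_iff, isOpen_iff_mem_nhds]
  intro t ht
  simp only [mem_compl_iff, mem_setOf_eq, not_exists, not_le] at ht
  have h0 := ht ⌊t⌋
  have h1' := ht (⌊t⌋ + 1)
  have hf1 : (⌊t⌋ : ℝ) ≤ t := Int.floor_le t
  have hf2 : t < ⌊t⌋ + 1 := Int.lt_floor_add_one t
  rw [abs_of_nonneg (by linarith)] at h0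
  have hb : t < ⌊t⌋ + 7/10 := by
    push_cast at h1' ⊢
    rw [abs_of_nonpos (by linarith)] at h1'
    linarith
  refine Filter.mem_of_superset (Ioo_mem_nhds (by linarith : (⌊t⌋:ℝ) + 3/10 < t) hb) ?_
  intro s hs
  simp only [mem_compl_iff, mem_setOf_eq, not_exists, not_le]
  intro k
  rcases le_or_gt k ⌊t⌋ with hk | hk
  · have hk' : (k:ℝ) ≤ ⌊t⌋ := by exact_mod_cast hk
    have : 3/10 < s - k := by cases hs; linarith
    calc (3:ℝ)/10 < s - k := this
      _ ≤ |s - k| := le_abs_self _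
  · have hk' : (⌊t⌋:ℝ) + 1 ≤ k := by exact_mod_cast hk
    have : 3/10 < (k:ℝ) - s := by cases hs; linarith
    calc (3:ℝ)/10 < (k:ℝ) - s := this
      _ ≤ |s - k| := by rw [abs_sub_comm]; exact le_abs_self _

lemma isClosed_An (n : ℕ) : IsClosed (An n) := by
  have h1 : IsClosed ((fun z : ℂ => (2:ℝ)^n * z.re) ⁻¹' {t : ℝ | ∃ k : ℤ, |t - k| ≤ 3/10}) :=
    isClosed_dist_int.preimage (continuous_const.mul Complex.continuous_re)
  have h2 : IsClosed {z : ℂ | |(2:ℝ)^n * z.im - 1| ≤ 3/10} := by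
    have : Continuous fun z : ℂ => |(2:ℝ)^n * z.im - 1| := by continuity
    exact isClosed_le this continuous_const
  exact h1.inter h2

lemma isOpen_D0 : IsOpen D0 := by
  have hD0 : D0 = {z : ℂ | 0 < z.im ∧ z.im < 4/3} \ ⋃ n, An n := by
    rw [D0, iUnion_Sp_eq]
  rw [hD0, isOpen_iff_mem_nhds]
  rintro z ⟨⟨h0, h43⟩, hz2⟩
  rw [mem_iUnion] at hz2
  push_neg at hz2
  obtain ⟨N, hN⟩ : ∃ N : ℕ, (13/10) * ((1:ℝ)/2)^N < z.im := by
    obtain ⟨N, hN⟩ := exists_pow_lt_of_lt_one (show (0:ℝ) < z.im * (10/13) by positivity)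
      (by norm_num : (1:ℝ)/2 < 1)
    exact ⟨N, by nlinarith⟩
  have hWopen : IsOpen ({w : ℂ | (13/10) * ((1:ℝ)/2)^N < w.im ∧ w.im < 4/3} ∩
      ⋂ n ∈ Finset.range N, (An n)ᶜ) := by
    apply IsOpen.inter
    · have : {w : ℂ | (13/10) * ((1:ℝ)/2)^N < w.im ∧ w.im < 4/3} =
        Complex.im ⁻¹' (Ioo ((13/10) * ((1:ℝ)/2)^N) (4/3)) := rfl
      rw [this]
      exact isOpen_Ioo.preimage Complex.continuous_im
    · exact isOpen_biInter_finset fun n _ => (isClosed_An n).isOpen_compl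
  refine Filter.mem_of_superset (hWopen.mem_nhds ⟨⟨hN, h43⟩, ?_⟩) ?_
  · exact mem_iInter₂.mpr fun n _ => hz2 n
  · rintro w ⟨⟨hw1, hw2⟩, hw3⟩
    have hwpos : 0 < w.im := lt_trans (by positivity) hw1
    refine ⟨⟨hwpos, hw2⟩, ?_⟩
    rw [mem_iUnion]
    rintro ⟨n, hn⟩
    rcases lt_or_ge n N with h | h
    · exact (mem_iInter₂.mp hw3 n (Finset.mem_range.mpr h)) hn
    · have him := hn.2
      have h13 : (2:ℝ)^n * w.im ≤ 13/10 := by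
        have := (abs_le.mp him).2; linarith
      have hpow : ((1:ℝ)/2)^N ≥ ((1:ℝ)/2)^n :=
        pow_le_pow_of_le_one (by norm_num) (by norm_num) h
      have hpn : (0:ℝ) < 2^n := by positivity
      have hhalf : ((1:ℝ)/2)^n = ((2:ℝ)^n)⁻¹ := by
        rw [one_div, inv_pow]
      have : w.im ≤ (13/10) * ((1:ℝ)/2)^n := by
        rw [hhalf, mul_comm]
        have := mul_le_mul_of_nonneg_left h13 (le_of_lt (inv_pos.mpr hpn))
        rwa [inv_mul_cancel_left₀ (ne_of_gt hpn)] at this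
      nlinarith

lemma div_two_re (z : ℂ) : (z/2).re = z.re/2 := by
  have : z / 2 = (((1:ℝ)/2 : ℝ) : ℂ) * z := by push_cast; ring
  rw [this, Complex.re_ofReal_mul]; ring

lemma div_two_im (z : ℂ) : (z/2).im = z.im/2 := by
  have : z / 2 = (((1:ℝ)/2 : ℝ) : ℂ) * z := by push_cast; ring
  rw [this, Complex.im_ofReal_mul]; ring

lemma two_mul_re (z : ℂ) : (2*z).re = 2*z.re := by
  have : (2:ℂ) * z = (((2:ℝ) : ℝ) : ℂ) * z := by push_cast; ring
  rw [this, Complex.re_ofReal_mul]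

lemma two_mul_im (z : ℂ) : (2*z).im = 2*z.im := by
  have : (2:ℂ) * z = (((2:ℝ) : ℝ) : ℂ) * z := by push_cast; ring
  rw [this, Complex.im_ofReal_mul]

lemma mem_D0_iff {z : ℂ} : z ∈ D0 ↔ (0 < z.im ∧ z.im < 4/3) ∧ ∀ n : ℕ, z ∉ An n := by
  rw [D0, iUnion_Sp_eq]
  simp only [mem_diff, mem_setOf_eq, mem_iUnion, not_exists]

lemma mem_D1_iff {z : ℂ} : z ∈ D1 ↔ (0 < z.im ∧ z.im < 2/3) ∧ ∀ n : ℕ, z ∉ An n := by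
  rw [D1, iUnion_Sp_eq]
  simp only [mem_diff, mem_setOf_eq, mem_iUnion, not_exists]

lemma D1_subset_D0 : D1 ⊆ D0 := fun z hz => by
  obtain ⟨⟨h1, h2⟩, h3⟩ := mem_D1_iff.mp hz
  exact mem_D0_iff.mpr ⟨⟨h1, by linarith⟩, h3⟩

lemma half_mem_D1 {z : ℂ} (hz : z ∈ D0) : z/2 ∈ D1 := by
  obtain ⟨⟨h0, h43⟩, hA⟩ := mem_D0_iff.mp hz
  refine mem_D1_iff.mpr ⟨⟨by rw [div_two_im]; linarith, by rw [div_two_im]; linarith⟩, ?_⟩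
  intro n hn
  obtain ⟨⟨k, hk⟩, him⟩ := hn
  rw [div_two_re] at hk
  rw [div_two_im] at him
  cases n with
  | zero =>
    simp only [pow_zero, one_mul] at him
    have := (abs_le.mp him).1
    linarith
  | succ m =>
    apply hA m
    constructor
    · refine ⟨k, ?_⟩
      have he : (2:ℝ)^(m+1) * (z.re/2) = (2:ℝ)^m * z.re := by ring
      rwa [he] at hk
    · have he : (2:ℝ)^(m+1) * (z.im/2) = (2:ℝ)^m * z.im := by ring
      rwa [he] at him

lemma half_mem_D0 {z : ℂ} (hz : z ∈ D0) : z/2 ∈ D0 := D1_subset_D0 (half_mem_D1 hz)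

lemma two_mem_D0 {z : ℂ} (hz : z ∈ D1) : 2*z ∈ D0 := by
  obtain ⟨⟨h0, h23⟩, hA⟩ := mem_D1_iff.mp hz
  refine mem_D0_iff.mpr ⟨⟨by rw [two_mul_im]; linarith, by rw [two_mul_im]; linarith⟩, ?_⟩
  intro n hn
  obtain ⟨⟨k, hk⟩, him⟩ := hn
  rw [two_mul_re] at hk
  rw [two_mul_im] at him
  apply hA (n+1)
  constructor
  · refine ⟨k, ?_⟩
    have he : (2:ℝ)^(n+1) * z.re = (2:ℝ)^n * (2*z.re) := by ring
    rwa [he]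
  · have he : (2:ℝ)^(n+1) * z.im = (2:ℝ)^n * (2*z.im) := by ring
    rwa [he]

lemma l1_subset_D0 : l1 ⊆ D0 := by
  intro z hz
  have him : z.im = 2/3 := hz
  refine mem_D0_iff.mpr ⟨⟨by rw [him]; norm_num, by rw [him]; norm_num⟩, ?_⟩
  intro n hn
  have h2 := hn.2
  rw [him] at h2
  have key : (1:ℝ)/3 ≤ |(2:ℝ)^n * (2/3) - 1| := by
    have he : (2:ℝ)^n * (2/3) - 1 = ((2 * 2^n - 3 : ℤ) : ℝ)/3 := by push_cast; ring
    rw [he, abs_div]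
    have hint : (2 * 2^n : ℤ) ≠ 3 := by
      intro hc
      have : (2:ℤ) ∣ 3 := ⟨2^n, hc.symm⟩
      norm_num at this
    have h1 : (1:ℤ) ≤ |2 * 2^n - 3| := Int.one_le_abs (sub_ne_zero.mpr hint)
    have h1' : (1:ℝ) ≤ |((2 * 2^n - 3 : ℤ) : ℝ)| := by
      rw [← Int.cast_abs]; exact_mod_cast h1
    rw [abs_of_nonneg (by norm_num : (0:ℝ) ≤ 3)]
    linarith
  linarith

lemma vert_mem_D0 {t : ℝ} (h0 : 0 < t) (h43 : t < 4/3) :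
    ((1/3 : ℝ) : ℂ) + (t : ℂ) * Complex.I ∈ D0 := by
  have hre : (((1/3 : ℝ) : ℂ) + (t : ℂ) * Complex.I).re = 1/3 := by simp
  have him : (((1/3 : ℝ) : ℂ) + (t : ℂ) * Complex.I).im = t := by simp
  refine mem_D0_iff.mpr ⟨⟨by rw [him]; exact h0, by rw [him]; exact h43⟩, ?_⟩
  intro n hn
  obtain ⟨⟨k, hk⟩, _⟩ := hn
  rw [hre] at hk
  have key : (1:ℝ)/3 ≤ |(2:ℝ)^n * (1/3) - k| := by
    have he : (2:ℝ)^n * (1/3) - k = ((2^n - 3*k : ℤ) : ℝ)/3 := by push_cast; ring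
    rw [he, abs_div]
    have hint : (2^n - 3*k : ℤ) ≠ 0 := by
      intro hc
      have hdvd : (3:ℤ) ∣ 2^n := ⟨k, by linarith⟩
      have := Int.Prime.dvd_pow' (by norm_num) hdvd
      norm_num at this
    have h1 : (1:ℤ) ≤ |2^n - 3*k| := Int.one_le_abs hint
    have h1' : (1:ℝ) ≤ |((2^n - 3*k : ℤ) : ℝ)| := by
      rw [← Int.cast_abs]; exact_mod_cast h1
    rw [abs_of_nonneg (by norm_num : (0:ℝ) ≤ 3)]
    linarith
  linarith

lemma closure_D0_subset : closure D0 ⊆ {z : ℂ | 0 ≤ z.im ∧ z.im ≤ 4/3} := by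
  apply closure_minimal
  · intro z hz
    obtain ⟨⟨h1, h2⟩, _⟩ := mem_D0_iff.mp hz
    exact ⟨h1.le, h2.le⟩
  · exact (isClosed_le continuous_const Complex.continuous_im).inter
      (isClosed_le Complex.continuous_im continuous_const)

def MVP (w : ℂ → ℝ) (U : Set ℂ) : Prop :=
  ∀ z ∈ U, ∀ ρ : ℝ, 0 < ρ → Metric.closedBall z ρ ⊆ U →
    w z = (1 / (2 * Real.pi)) *
      ∫ θ in (0:ℝ)..(2 * Real.pi), w (z + ρ * Complex.exp (θ * Complex.I))

lemma circle_point_mem {z : ℂ} {ρ : ℝ} (hρ : 0 < ρ) (θ : ℝ) :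
    z + ρ * Complex.exp (θ * Complex.I) ∈ Metric.closedBall z ρ := by
  rw [Metric.mem_closedBall, Complex.dist_eq]
  have : z + ρ * Complex.exp (θ * Complex.I) - z = ρ * Complex.exp (θ * Complex.I) := by ring
  rw [this, norm_mul, Complex.norm_exp_ofReal_mul_I]
  simp [abs_of_pos hρ]

lemma exists_theta {c w : ℂ} {ρ : ℝ} (hρ : dist w c = ρ) (h : w ≠ c) :
    ∃ θ ∈ Icc (0:ℝ) (2*Real.pi), c + ρ * Complex.exp (θ * Complex.I) = w := by
  set ξ := w - c with hξdef
  have hξ : ξ ≠ 0 := sub_ne_zero.mpr h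
  have habs : (‖ξ‖ : ℝ) = ρ := by rw [← hρ, Complex.dist_eq]
  have hkey : ∀ θ : ℝ, Complex.exp ((θ:ℂ) * Complex.I) = Complex.exp ((Complex.arg ξ : ℂ) * Complex.I) →
      c + ρ * Complex.exp ((θ:ℂ) * Complex.I) = w := by
    intro θ hθ
    rw [hθ, ← habs, Complex.norm_mul_exp_arg_mul_I ξ]
    rw [hξdef]; ring
  rcases le_or_gt 0 (Complex.arg ξ) with h0 | h0
  · refine ⟨Complex.arg ξ, ⟨h0, ?_⟩, hkey _ rfl⟩
    have := Complex.arg_le_pi ξ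
    have := Real.pi_pos
    linarith
  · refine ⟨Complex.arg ξ + 2*Real.pi, ⟨?_, ?_⟩, hkey _ ?_⟩
    · have := Complex.neg_pi_lt_arg ξ
      have := Real.pi_pos
      linarith
    · linarith
    · push_cast
      rw [add_mul, Complex.exp_add]
      have : Complex.exp (2 * Real.pi * Complex.I) = 1 := Complex.exp_two_pi_mul_I
      rw [this, mul_one]

lemma MVP.ball_const {U : Set ℂ} {w : ℂ → ℝ} (hw : ContinuousOn w (closure U))
    (hmv : MVP w U) {m : ℝ} (hm : ∀ z ∈ closure U, m ≤ w z)
    {z0 : ℂ} (hz0 : z0 ∈ U) (hz0m : w z0 = m) {r : ℝ} (hr : 0 < r)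
    (hball : Metric.closedBall z0 r ⊆ U) : ∀ w' ∈ Metric.ball z0 r, w w' = m := by
  intro w' hw'
  rcases eq_or_ne w' z0 with rfl | hne
  · exact hz0m
  have hρ : 0 < dist w' z0 := dist_pos.mpr hne
  set ρ := dist w' z0 with hρdef
  have hρr : ρ < r := hw'
  have hball' : Metric.closedBall z0 ρ ⊆ U :=
    (Metric.closedBall_subset_closedBall hρr.le).trans hball
  have hmvz := hmv z0 hz0 ρ hρ hball'
  have h2π : (0:ℝ) < 2*Real.pi := by positivity
  set φ : ℝ → ℂ := fun θ => z0 + ρ * Complex.exp (θ * Complex.I) with hφdef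
  have hφU : ∀ θ : ℝ, φ θ ∈ U := fun θ => hball' (circle_point_mem hρ θ)
  have hφcont : Continuous φ := by
    apply continuous_const.add
    apply continuous_const.mul
    exact Complex.continuous_exp.comp ((Complex.continuous_ofReal).mul continuous_const)
  have hcomp : Continuous fun θ => w (φ θ) :=
    hw.comp_continuous hφcont fun θ => subset_closure (hφU θ)
  have hint : IntervalIntegrable (fun θ => w (φ θ)) MeasureTheory.volume 0 (2*Real.pi) :=
    hcomp.intervalIntegrable _ _
  have hI : (∫ θ in (0:ℝ)..(2*Real.pi), w (φ θ)) = 2*Real.pi * m := by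
    rw [hz0m] at hmvz
    field_simp at hmvz
    linarith
  by_contra hnem
  have hw'U : w' ∈ U := hball' (Metric.mem_closedBall.mpr (le_of_eq hρdef.symm))
  have hmlt : m < w w' := lt_of_le_of_ne (hm w' (subset_closure hw'U)) (Ne.symm hnem)
  obtain ⟨θ0, hθ0mem, hθ0⟩ := exists_theta (rfl : dist w' z0 = ρ) hne
  have hpos : 0 < ∫ θ in (0:ℝ)..(2*Real.pi), (w (φ θ) - m) := by
    apply intervalIntegral.integral_pos h2π
    · exact (hcomp.sub continuous_const).continuousOn
    · exact fun x _ => sub_nonneg.mpr (hm _ (subset_closure (hφU x)))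
    · refine ⟨θ0, hθ0mem, ?_⟩
      have : φ θ0 = w' := hθ0
      rw [this]
      linarith
  have hzero : (∫ θ in (0:ℝ)..(2*Real.pi), (w (φ θ) - m)) = 0 := by
    rw [intervalIntegral.integral_sub hint (intervalIntegrable_const)]
    rw [hI, intervalIntegral.integral_const]
    simp
  linarith

lemma const_on_component {U : Set ℂ} (hU : IsOpen U) {w : ℂ → ℝ}
    (hw : ContinuousOn w (closure U)) (hmv : MVP w U) {m : ℝ}
    (hm : ∀ z ∈ closure U, m ≤ w z) {p : ℂ} (hp : p ∈ U) (hpm : w p = m) :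
    ∀ z ∈ connectedComponentIn U p, w z = m := by
  set A : Set ℂ := {z | z ∈ U ∧ w z = m} with hAdef
  have hAopen : IsOpen A := by
    rw [Metric.isOpen_iff]
    rintro z ⟨hzU, hzm⟩
    obtain ⟨ε, hε, hballε⟩ := Metric.isOpen_iff.mp hU z hzU
    refine ⟨ε/2, by linarith, fun y hy => ?_⟩
    have hball2 : Metric.closedBall z (ε/2) ⊆ U :=
      (Metric.closedBall_subset_ball (by linarith)).trans hballε
    have hc := MVP.ball_const hw hmv hm hzU hzm (by linarith : (0:ℝ) < ε/2) hball2
    exact ⟨(Metric.ball_subset_closedBall.trans hball2) hy, hc y hy⟩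
  have hVopen : IsOpen {z | z ∈ U ∧ w z ≠ m} := by
    have h1 : ContinuousOn w U := hw.mono subset_closure
    exact h1.isOpen_inter_preimage hU ((isOpen_compl_singleton : IsOpen ({m}ᶜ : Set ℝ)))
  have hsub : connectedComponentIn U p ⊆ A ∪ {z | z ∈ U ∧ w z ≠ m} := by
    intro z hz
    have hzU := connectedComponentIn_subset U p hz
    by_cases h : w z = m
    · exact Or.inl ⟨hzU, h⟩
    · exact Or.inr ⟨hzU, h⟩
  have hdisj : Disjoint A {z | z ∈ U ∧ w z ≠ m} := by
    rw [Set.disjoint_left]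
    rintro z ⟨_, h1⟩ ⟨_, h2⟩
    exact h2 h1
  have hpre : IsPreconnected (connectedComponentIn U p) := isPreconnected_connectedComponentIn
  have hres := hpre.subset_left_of_subset_union hAopen hVopen hdisj hsub
    ⟨p, mem_connectedComponentIn hp, ⟨hp, hpm⟩⟩
  exact fun z hz => (hres hz).2

lemma component_frontier {U : Set ℂ} (hU : IsOpen U) {p : ℂ} (hp : p ∈ U)
    (hne : U ≠ univ) : ∃ q, q ∈ frontier U ∧ q ∈ closure (connectedComponentIn U p) := by
  set C := connectedComponentIn U p with hCdef
  have hCopen : IsOpen C := hU.connectedComponentIn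
  have hCne : C.Nonempty := ⟨p, mem_connectedComponentIn hp⟩
  have hCneuniv : C ≠ univ := by
    intro h
    apply hne
    apply eq_univ_of_univ_subset
    rw [← h]
    exact connectedComponentIn_subset U p
  have hfr : (frontier C).Nonempty := by
    rw [nonempty_iff_ne_empty]
    intro h
    rcases isClopen_iff.mp (isClopen_iff_frontier_eq_empty.mpr h) with h1 | h1
    · exact hCne.ne_empty h1
    · exact hCneuniv h1
  obtain ⟨q, hq⟩ := hfr
  rw [hCopen.frontier_eq] at hq
  have hqU : q ∉ U := by
    intro hqU
    obtain ⟨y, hy1, hy2⟩ := mem_closure_iff.mp hq.1 _ hU.connectedComponentIn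
      (mem_connectedComponentIn hqU)
    have h1 : connectedComponentIn U q = connectedComponentIn U y := connectedComponentIn_eq hy1
    have h2 : connectedComponentIn U p = connectedComponentIn U y := connectedComponentIn_eq hy2
    have : q ∈ C := by
      rw [hCdef, h2, ← h1]
      exact mem_connectedComponentIn hqU
    exact hq.2 this
  refine ⟨q, ?_, hq.1⟩
  rw [hU.frontier_eq]
  exact ⟨closure_mono (connectedComponentIn_subset U p) hq.1, hqU⟩

lemma nonneg_on_bounded {Ω : Set ℂ} (hΩo : IsOpen Ω) (hb : Bornology.IsBounded Ω)
    {g : ℂ → ℝ} (hg : ContinuousOn g (closure Ω)) (hmv : MVP g Ω)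
    (hbd : ∀ z ∈ frontier Ω, 0 ≤ g z) : ∀ z ∈ closure Ω, 0 ≤ g z := by
  rcases Ω.eq_empty_or_nonempty with rfl | hne
  · simp
  have hcomp : IsCompact (closure Ω) := hb.isCompact_closure
  obtain ⟨p, hpcl, hpmin⟩ := hcomp.exists_isMinOn hne.closure hg
  set m := g p with hmdef
  have hpmin' : ∀ z ∈ closure Ω, m ≤ g z := fun z hz => hpmin hz
  rcases le_or_gt 0 m with hm | hm
  · exact fun z hz => hm.trans (hpmin' z hz)
  exfalso
  have hpΩ : p ∈ Ω := by
    by_contra hpn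
    have hpf : p ∈ frontier Ω := by
      have : frontier Ω = closure Ω \ Ω := by rw [frontier, hΩo.interior_eq]
      rw [this]
      exact ⟨hpcl, hpn⟩
    exact absurd (hbd p hpf) (not_le.mpr hm)
  have hconst := const_on_component hΩo hg hmv hpmin' hpΩ rfl
  have hneuniv : Ω ≠ univ := by
    intro h
    obtain ⟨r, hr⟩ := hb.subset_closedBall 0
    have : ((|r| + 1 : ℝ) : ℂ) ∈ Metric.closedBall (0:ℂ) r := hr (h ▸ mem_univ _)
    rw [Metric.mem_closedBall, Complex.dist_eq, sub_zero] at this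
    rw [Complex.norm_real, Real.norm_eq_abs] at this
    have h1 : |r| + 1 ≤ r := le_trans (le_abs_self _) this
    have := le_abs_self r
    linarith [abs_nonneg r]
  obtain ⟨q, hqf, hqcl⟩ := component_frontier hΩo hpΩ hneuniv
  have hq0 : 0 ≤ g q := hbd q hqf
  have hqm : g q = m := by
    have hqclΩ : q ∈ closure Ω := frontier_subset_closure hqf
    have hcw : ContinuousWithinAt g (connectedComponentIn Ω p) q :=
      (hg q hqclΩ).mono ((connectedComponentIn_subset Ω p).trans subset_closure)
    have hmem := hcw.mem_closure_image hqcl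
    have himg : g '' connectedComponentIn Ω p ⊆ {m} := by
      rintro _ ⟨x, hx, rfl⟩
      exact hconst x hx
    have := closure_mono himg hmem
    rw [closure_singleton] at this
    exact this
  linarith

lemma cosh_re' (z : ℂ) : (Complex.cosh z).re = Real.cosh z.re * Real.cos z.im := by
  rw [Complex.cosh, Real.cosh_eq]
  simp [Complex.exp_re, Complex.add_re, Complex.div_re, Complex.normSq]
  ring

lemma mvp_coshre (c : ℂ) (ρ : ℝ) (hρ : 0 < ρ) :
    (Complex.cosh c).re = (1 / (2 * Real.pi)) *
      ∫ θ in (0:ℝ)..(2*Real.pi), (Complex.cosh (c + ρ * Complex.exp (θ * Complex.I))).re := by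
  have hπ : Real.pi ≠ 0 := Real.pi_ne_zero
  have hd : DifferentiableOn ℂ Complex.cosh (Metric.closedBall c ρ) :=
    Complex.differentiable_cosh.differentiableOn
  have hC := hd.circleIntegral_sub_inv_smul (Metric.mem_ball_self hρ)
  rw [circleIntegral] at hC
  simp only [deriv_circleMap, smul_eq_mul, circleMap_sub_center] at hC
  have hcirc : ∀ θ : ℝ, circleMap 0 ρ θ ≠ 0 := fun θ => by
    simp only [circleMap, zero_add]
    refine mul_ne_zero ?_ (Complex.exp_ne_zero _)
    exact_mod_cast ne_of_gt hρ
  have heq : ∀ θ : ℝ, circleMap 0 ρ θ * Complex.I *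
      ((circleMap 0 ρ θ)⁻¹ * Complex.cosh (circleMap c ρ θ)) =
      Complex.I * Complex.cosh (circleMap c ρ θ) := fun θ => by
    have h1 : circleMap 0 ρ θ * Complex.I * ((circleMap 0 ρ θ)⁻¹ * Complex.cosh (circleMap c ρ θ)) =
        (circleMap 0 ρ θ * (circleMap 0 ρ θ)⁻¹) * (Complex.I * Complex.cosh (circleMap c ρ θ)) := by
      ring
    rw [h1, mul_inv_cancel₀ (hcirc θ), one_mul]
  rw [intervalIntegral.integral_congr (fun θ _ => heq θ)] at hC
  rw [intervalIntegral.integral_const_mul] at hC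
  have hIne : (Complex.I : ℂ) ≠ 0 := Complex.I_ne_zero
  have h2 : (∫ θ in (0:ℝ)..(2*Real.pi), Complex.cosh (circleMap c ρ θ)) =
      ((2*Real.pi : ℝ) : ℂ) * Complex.cosh c := by
    apply mul_left_cancel₀ hIne
    rw [hC]
    push_cast
    ring
  have hcont : Continuous fun θ : ℝ => Complex.cosh (circleMap c ρ θ) := by
    apply Complex.continuous_cosh.comp
    exact continuous_circleMap c ρ
  have hint : IntervalIntegrable (fun θ : ℝ => Complex.cosh (circleMap c ρ θ))
      MeasureTheory.volume 0 (2*Real.pi) := hcont.intervalIntegrable _ _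
  have hre := Complex.reCLM.intervalIntegral_comp_comm hint
  -- hre : ∫ reCLM (f θ) = reCLM (∫ f)  (check direction)
  have h3 : (∫ θ in (0:ℝ)..(2*Real.pi), (Complex.cosh (circleMap c ρ θ)).re) =
      2*Real.pi * (Complex.cosh c).re := by
    have : (fun θ : ℝ => (Complex.cosh (circleMap c ρ θ)).re) =
        fun θ : ℝ => Complex.reCLM (Complex.cosh (circleMap c ρ θ)) := rfl
    rw [this, hre, h2]
    simp [Complex.re_ofReal_mul]
  have hfinal : (∫ θ in (0:ℝ)..(2*Real.pi), (Complex.cosh (c + ρ * Complex.exp (θ * Complex.I))).re) =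
      2*Real.pi * (Complex.cosh c).re := by
    rw [← h3]
    apply intervalIntegral.integral_congr
    intro θ _
    rfl
  rw [hfinal]
  field_simp

lemma nonneg_on_D0 {w : ℂ → ℝ} (hw : ContinuousOn w (closure D0)) (hmv : MVP w D0)
    {B : ℝ} (hB : ∀ z ∈ closure D0, -B ≤ w z) (hbd : ∀ z ∈ frontier D0, 0 ≤ w z) :
    ∀ z ∈ closure D0, 0 ≤ w z := by
  intro z0 hz0
  rcases em (z0 ∈ D0) with hz0' | hz0'
  swap
  · refine hbd z0 ?_
    have : frontier D0 = closure D0 \ D0 := by rw [frontier, isOpen_D0.interior_eq]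
    rw [this]; exact ⟨hz0, hz0'⟩
  set c0 : ℝ := Real.cos (4/3) with hc0def
  have hπ3 : (3:ℝ) < Real.pi := Real.pi_gt_three
  have hc0 : 0 < c0 := Real.cos_pos_of_mem_Ioo ⟨by linarith, by linarith⟩
  have hcos_ge : ∀ y : ℝ, 0 ≤ y → y ≤ 4/3 → c0 ≤ Real.cos y := fun y h1 h2 =>
    Real.cos_le_cos_of_nonneg_of_le_pi h1 (by linarith) h2
  have hH : ∀ z : ℂ, z ∈ closure D0 → c0 ≤ (Complex.cosh z).re := by
    intro z hz
    obtain ⟨h1, h2⟩ := closure_D0_subset hz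
    rw [cosh_re']
    have hch : 1 ≤ Real.cosh z.re := Real.one_le_cosh z.re
    have hcs : c0 ≤ Real.cos z.im := hcos_ge _ h1 h2
    nlinarith
  have hHz0 : 0 < (Complex.cosh z0).re := lt_of_lt_of_le hc0 (hH z0 hz0)
  have key : ∀ ε : ℝ, 0 < ε → -(ε * (Complex.cosh z0).re) ≤ w z0 := by
    intro ε hε
    set R : ℝ := max (|z0.re| + 1) (2*(B+1)/(ε*c0) + 1) with hRdef
    have hR1 : |z0.re| + 1 ≤ R := le_max_left _ _
    have hR2 : 2*(B+1)/(ε*c0) + 1 ≤ R := le_max_right _ _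
    have hRpos : 0 < R := lt_of_lt_of_le (by positivity) hR1
    set V : Set ℂ := Complex.re ⁻¹' (Ioo (-R) R) with hVdef
    have hVopen : IsOpen V := isOpen_Ioo.preimage Complex.continuous_re
    set Ω := D0 ∩ V with hΩdef
    set g : ℂ → ℝ := fun z => w z + ε * (Complex.cosh z).re with hgdef
    have hΩo : IsOpen Ω := isOpen_D0.inter hVopen
    have hclΩ : closure Ω ⊆ closure D0 := closure_mono inter_subset_left
    -- cosh bound
    have hcoshR : ∀ x : ℝ, R ≤ |x| → (B+1)/(ε*c0) ≤ Real.cosh x := by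
      intro x hx
      have h1 : Real.exp |x| ≤ 2 * Real.cosh x := by
        rw [Real.cosh_eq]
        rcases abs_cases x with ⟨h, _⟩ | ⟨h, _⟩ <;> rw [h] <;>
          [linarith [Real.exp_pos (-x)]; linarith [Real.exp_pos x]]
      have h2 : |x| + 1 ≤ Real.exp |x| := Real.add_one_le_exp _
      have h4 : 2*(B+1)/(ε*c0) = 2*((B+1)/(ε*c0)) := by ring
      have h3 : (B+1)/(ε*c0) ≤ (R+1)/2 := by
        rw [h4] at hR2
        linarith
      have : (R+1)/2 ≤ Real.cosh x := by linarith
      linarith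
    -- boundary
    have hgbd : ∀ z ∈ frontier Ω, 0 ≤ g z := by
      intro z hzf
      have hzcl : z ∈ closure D0 := hclΩ (frontier_subset_closure hzf)
      obtain ⟨him0, him43⟩ := closure_D0_subset hzcl
      have hcosz : c0 ≤ Real.cos z.im := hcos_ge _ him0 him43
      have hch1 : 1 ≤ Real.cosh z.re := Real.one_le_cosh z.re
      rcases frontier_inter_subset D0 V hzf with h | h
      · have h0 : 0 ≤ w z := hbd z h.1
        have hpos : 0 ≤ (Complex.cosh z).re := by rw [cosh_re']; nlinarith
        have : 0 ≤ ε * (Complex.cosh z).re := by positivity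
        simp only [hgdef]
        linarith
      · -- |z.re| = R
        have hfv : R ≤ |z.re| := by
          have h1 : z.re ∈ Icc (-R) R := by
            have : closure V ⊆ Complex.re ⁻¹' (Icc (-R) R) :=
              closure_minimal (fun y hy => Ioo_subset_Icc_self hy)
                ((isClosed_Icc).preimage Complex.continuous_re)
            exact this (frontier_subset_closure h.2)
          have h2 : z.re ∉ Ioo (-R) R := by
            intro hc
            have : z ∈ interior V := by
              rw [hVopen.interior_eq]; exact hc
            exact h.2.2 this
          simp only [mem_Icc] at h1
          simp only [mem_Ioo, not_and_or, not_lt] at h2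
          rcases h2 with h2 | h2
          · rw [abs_of_nonpos (by linarith)]; linarith
          · rw [abs_of_nonneg (by linarith)]; linarith
        have hcosh := hcoshR z.re hfv
        have hB' : -B ≤ w z := hB z hzcl
        have hprod : B + 1 ≤ ε * (Complex.cosh z).re := by
          rw [cosh_re']
          have hεc0 : 0 < ε * c0 := by positivity
          have h1 : ε * c0 * ((B+1)/(ε*c0)) ≤ ε * c0 * Real.cosh z.re :=
            mul_le_mul_of_nonneg_left hcosh hεc0.le
          rw [mul_div_cancel₀ _ (ne_of_gt hεc0)] at h1
          have hcoshpos : 0 < Real.cosh z.re := lt_of_lt_of_le one_pos hch1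
          have h2 : ε * Real.cosh z.re * c0 ≤ ε * Real.cosh z.re * Real.cos z.im :=
            mul_le_mul_of_nonneg_left hcosz (by positivity)
          nlinarith [h1, h2]
        simp only [hgdef]
        linarith
    -- bounded
    have hΩb : Bornology.IsBounded Ω := by
      apply (Metric.isBounded_closedBall (x := (0:ℂ)) (r := R + 2)).subset
      rintro z ⟨hz1, hz2⟩
      rw [Metric.mem_closedBall]
      have hd : dist z 0 = ‖z‖ := by rw [Complex.dist_eq, sub_zero]
      rw [hd]
      have h1 : |z.re| ≤ R := by
        have := hz2
        simp only [hVdef, mem_preimage, mem_Ioo] at this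
        rw [abs_le]; exact ⟨this.1.le, this.2.le⟩
      obtain ⟨⟨hi1, hi2⟩, _⟩ := mem_D0_iff.mp hz1
      have h2 : |z.im| ≤ 4/3 := by rw [abs_of_pos hi1]; linarith
      calc ‖z‖ ≤ |z.re| + |z.im| := Complex.norm_le_abs_re_add_abs_im z
        _ ≤ R + 2 := by linarith
    -- continuity of g
    have hgcont : ContinuousOn g (closure Ω) := by
      apply ContinuousOn.add (hw.mono hclΩ)
      exact (continuous_const.mul
        (Complex.continuous_re.comp Complex.continuous_cosh)).continuousOn
    -- MVP of g on Ω
    have hgmv : MVP g Ω := by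
      intro z hz ρ hρ hball
      have hballD : Metric.closedBall z ρ ⊆ D0 := hball.trans inter_subset_left
      have h1 := hmv z hz.1 ρ hρ hballD
      have h2 := mvp_coshre z ρ hρ
      have hφcont : Continuous fun θ : ℝ => z + ρ * Complex.exp (θ * Complex.I) := by
        apply continuous_const.add
        exact continuous_const.mul
          (Complex.continuous_exp.comp ((Complex.continuous_ofReal).mul continuous_const))
      have hint1 : IntervalIntegrable (fun θ => w (z + ρ * Complex.exp (θ * Complex.I)))
          MeasureTheory.volume 0 (2*Real.pi) := by
        apply Continuous.intervalIntegrable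
        exact hw.comp_continuous hφcont fun θ => subset_closure (hballD (circle_point_mem hρ θ))
      have hint2 : IntervalIntegrable
          (fun θ => (Complex.cosh (z + ρ * Complex.exp (θ * Complex.I))).re)
          MeasureTheory.volume 0 (2*Real.pi) := by
        apply Continuous.intervalIntegrable
        exact (Complex.continuous_re.comp Complex.continuous_cosh).comp hφcont
      simp only [hgdef]
      have hsum : (∫ θ in (0:ℝ)..(2*Real.pi), (w (z + ρ * Complex.exp (θ * Complex.I)) +
          ε * (Complex.cosh (z + ρ * Complex.exp (θ * Complex.I))).re)) =
          (∫ θ in (0:ℝ)..(2*Real.pi), w (z + ρ * Complex.exp (θ * Complex.I))) +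
          ε * ∫ θ in (0:ℝ)..(2*Real.pi), (Complex.cosh (z + ρ * Complex.exp (θ * Complex.I))).re := by
        rw [intervalIntegral.integral_add hint1 (hint2.const_mul ε),
          intervalIntegral.integral_const_mul]
      rw [h1, h2, hsum]
      ring
    -- z0 ∈ Ω
    have hz0Ω : z0 ∈ Ω := by
      refine ⟨hz0', ?_⟩
      simp only [hVdef, mem_preimage, mem_Ioo]
      constructor
      · have := neg_abs_le z0.re; linarith
      · have := le_abs_self z0.re; linarith
    have hres := nonneg_on_bounded hΩo hΩb hgcont hgmv hgbd z0 (subset_closure hz0Ω)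
    simp only [hgdef] at hres
    linarith
  by_contra hneg
  push_neg at hneg
  set H := (Complex.cosh z0).re with hHdef
  have hεH : ((-w z0) / (2*H)) * H = -w z0/2 := by
    field_simp
  have := key ((-w z0) / (2*H)) (div_pos (by linarith) (by positivity))
  rw [hεH] at this
  linarith

theorem dirichlet_sol_doubling (u : ℂ → ℝ) (hu : IsDirichletSol u)
    (M : ℝ) (hM : IsLeast (u '' l1) M⁻¹) :
    (∀ z ∈ D1, u (2 * z) ≤ M * u z) ∧ (∀ z ∈ D0, u z ≤ M * u (z / 2)) := by
  obtain ⟨⟨C, hC⟩, hcont, ⟨_, humv0⟩, hl0, hfr⟩ := hu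
  have humv : MVP u D0 := humv0
  -- Step A : u ≥ 0 on closure D0
  have hA : ∀ z ∈ closure D0, 0 ≤ u z := by
    refine nonneg_on_D0 hcont humv (B := C) (fun z hz => (abs_le.mp (hC z hz)).1) ?_
    intro z hz
    by_cases h : z ∈ l0
    · rw [hl0 z h]; norm_num
    · rw [hfr z ⟨hz, h⟩]
  -- M⁻¹ value
  obtain ⟨z1, hz1l1, hz1⟩ := hM.1
  have hz1D0 : z1 ∈ D0 := l1_subset_D0 hz1l1
  have hMinv_nonneg : 0 ≤ M⁻¹ := hz1 ▸ hA z1 (subset_closure hz1D0)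
  -- strong minimum principle : M⁻¹ > 0
  have hMinv_pos : 0 < M⁻¹ := by
    rcases hMinv_nonneg.lt_or_eq with h | h
    · exact h
    exfalso
    have hz10 : u z1 = 0 := by rw [hz1, ← h]
    have hconst := const_on_component isOpen_D0 hcont humv (m := 0) hA hz1D0 hz10
    set f : ℝ → ℂ := fun t => ((1/3 : ℝ) : ℂ) + (t : ℂ) * Complex.I with hfdef
    have hfcont : Continuous f := by
      apply continuous_const.add
      exact Complex.continuous_ofReal.mul continuous_const
    have hLv : ∀ t ∈ Ico (2/3 : ℝ) (4/3 : ℝ), f t ∈ D0 := fun t ht =>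
      vert_mem_D0 (lt_of_lt_of_le (by norm_num) ht.1) ht.2
    have hfz1 : f (2/3) ∈ l1 := by simp [l1, hfdef]
    have hl1conv : Convex ℝ l1 := by
      have : l1 = {z : ℂ | z.im = 2/3} := rfl
      rw [this]
      intro x hx y hy a b ha hb hab
      simp only [mem_setOf_eq] at hx hy ⊢
      have hax : (a • x).im = a * x.im := by rw [Complex.real_smul, Complex.im_ofReal_mul]
      have hby : (b • y).im = b * y.im := by rw [Complex.real_smul, Complex.im_ofReal_mul]
      rw [Complex.add_im, hax, hby, hx, hy]
      linarith
    have hl1conn : IsPreconnected l1 := hl1conv.isPreconnected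
    have hvconn : IsPreconnected (f '' (Ico (2/3:ℝ) (4/3))) :=
      (isPreconnected_Ico).image f hfcont.continuousOn
    have hLconn : IsPreconnected (l1 ∪ f '' (Ico (2/3:ℝ) (4/3))) := by
      apply IsPreconnected.union (f (2/3)) hfz1 ?_ hl1conn hvconn
      exact ⟨2/3, ⟨le_refl _, by norm_num⟩, rfl⟩
    have hLsub : l1 ∪ f '' (Ico (2/3:ℝ) (4/3)) ⊆ D0 := by
      apply union_subset l1_subset_D0
      rintro x ⟨t, ht, rfl⟩
      exact hLv t ht
    have hLcomp : l1 ∪ f '' (Ico (2/3:ℝ) (4/3)) ⊆ connectedComponentIn D0 z1 :=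
      hLconn.subset_connectedComponentIn (Or.inl hz1l1) hLsub
    have hu0 : ∀ x ∈ f '' (Ico (2/3:ℝ) (4/3)), u x = 0 := fun x hx =>
      hconst x (hLcomp (Or.inr hx))
    set q0 : ℂ := f (4/3) with hq0def
    have hq0l0 : q0 ∈ l0 := by simp [l0, hq0def, hfdef]
    have hq0cl : q0 ∈ closure (f '' (Ico (2/3:ℝ) (4/3))) := by
      have h1 : q0 ∈ f '' (closure (Ico (2/3:ℝ) (4/3))) := by
        refine ⟨4/3, ?_, rfl⟩
        rw [closure_Ico (by norm_num : (2/3:ℝ) ≠ 4/3)]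
        exact ⟨by norm_num, le_refl _⟩
      exact image_closure_subset_closure_image hfcont h1
    have hsubcl : f '' (Ico (2/3:ℝ) (4/3)) ⊆ closure D0 := fun x hx =>
      subset_closure (hLsub (Or.inr hx))
    have hq0clD0 : q0 ∈ closure D0 := by
      have := closure_mono hsubcl hq0cl
      rwa [closure_closure] at this
    have hcw : ContinuousWithinAt u (f '' (Ico (2/3:ℝ) (4/3))) q0 :=
      (hcont q0 hq0clD0).mono hsubcl
    have hmem := hcw.mem_closure_image hq0cl
    have himg : u '' (f '' (Ico (2/3:ℝ) (4/3))) ⊆ {0} := by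
      rintro _ ⟨x, hx, rfl⟩
      exact hu0 x hx
    have hval : u q0 = 0 := by
      have := closure_mono himg hmem
      rwa [closure_singleton] at this
    rw [hl0 q0 hq0l0] at hval
    norm_num at hval
  have hMpos : 0 < M := inv_pos.mp hMinv_pos
  have hMM : M * M⁻¹ = 1 := mul_inv_cancel₀ (ne_of_gt hMpos)
  -- the comparison function
  set w : ℂ → ℝ := fun z => M * u (z/2) - u z with hwdef
  have hhalfcl : ∀ z ∈ closure D0, z/2 ∈ closure D0 := by
    have hmt : MapsTo (fun z : ℂ => z/2) D0 D0 := fun z hz => half_mem_D0 hz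
    have hcd : Continuous fun z : ℂ => z/2 := continuous_id.div_const 2
    exact fun z hz => (hmt.closure hcd) hz
  have hwcont : ContinuousOn w (closure D0) := by
    apply ContinuousOn.sub ?_ hcont
    apply ContinuousOn.const_smul ?_ M
    exact hcont.comp (continuous_id.div_const 2).continuousOn hhalfcl
  have hwmv : MVP w D0 := by
    intro z hz ρ hρ hball
    have h1 := humv z hz ρ hρ hball
    have hhalf : z/2 ∈ D0 := half_mem_D0 hz
    have hball2 : Metric.closedBall (z/2) (ρ/2) ⊆ D0 := by
      intro y hy
      have h2y : 2*y ∈ Metric.closedBall z ρ := by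
        rw [Metric.mem_closedBall, Complex.dist_eq] at hy ⊢
        have he : 2*y - z = 2*(y - z/2) := by ring
        rw [he, norm_mul]
        have : ‖(2:ℂ)‖ = 2 := by norm_num
        rw [this]
        linarith
      have := half_mem_D0 (hball h2y)
      have he : (2*y)/2 = y := by ring
      rwa [he] at this
    have h2 := humv (z/2) hhalf (ρ/2) (by linarith) hball2
    have hptw : ∀ θ : ℝ, z/2 + ((ρ/2 : ℝ) : ℂ) * Complex.exp (θ * Complex.I) =
        (z + ρ * Complex.exp (θ * Complex.I))/2 := by
      intro θ
      push_cast
      ring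
    rw [intervalIntegral.integral_congr (fun θ _ => by rw [hptw θ])] at h2
    have hφcont : Continuous fun θ : ℝ => z + ρ * Complex.exp (θ * Complex.I) := by
      apply continuous_const.add
      exact continuous_const.mul
        (Complex.continuous_exp.comp ((Complex.continuous_ofReal).mul continuous_const))
    have hint1 : IntervalIntegrable (fun θ => u (z + ρ * Complex.exp (θ * Complex.I)))
        MeasureTheory.volume 0 (2*Real.pi) := by
      apply Continuous.intervalIntegrable
      exact hcont.comp_continuous hφcont fun θ =>
        subset_closure (hball (circle_point_mem hρ θ))
    have hint2 : IntervalIntegrable (fun θ => u ((z + ρ * Complex.exp (θ * Complex.I))/2))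
        MeasureTheory.volume 0 (2*Real.pi) := by
      apply Continuous.intervalIntegrable
      have : Continuous fun θ : ℝ => (z + ρ * Complex.exp (θ * Complex.I))/2 :=
        hφcont.div_const 2
      exact hcont.comp_continuous this fun θ =>
        subset_closure (half_mem_D0 (hball (circle_point_mem hρ θ)))
    simp only [hwdef]
    have hsum : (∫ θ in (0:ℝ)..(2*Real.pi), (M * u ((z + ρ * Complex.exp (θ * Complex.I))/2) -
        u (z + ρ * Complex.exp (θ * Complex.I)))) =
        M * (∫ θ in (0:ℝ)..(2*Real.pi), u ((z + ρ * Complex.exp (θ * Complex.I))/2)) -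
        ∫ θ in (0:ℝ)..(2*Real.pi), u (z + ρ * Complex.exp (θ * Complex.I)) := by
      rw [intervalIntegral.integral_sub (hint2.const_mul M) hint1,
        intervalIntegral.integral_const_mul]
    rw [h1, h2, hsum]
    ring
  have hwB : ∀ z ∈ closure D0, -(M*C + C) ≤ w z := by
    intro z hz
    have h1 := (abs_le.mp (hC _ (hhalfcl z hz))).1
    have h2 := (abs_le.mp (hC z hz)).2
    have h3 : M * (-C) ≤ M * u (z/2) := mul_le_mul_of_nonneg_left h1 hMpos.le
    simp only [hwdef]
    nlinarith
  have hwbd : ∀ z ∈ frontier D0, 0 ≤ w z := by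
    intro z hz
    have hzcl : z ∈ closure D0 := frontier_subset_closure hz
    by_cases h : z ∈ l0
    · have h1 : u z = 1 := hl0 z h
      have hz2 : z/2 ∈ l1 := by
        have : z.im = 4/3 := h
        show (z/2).im = 2/3
        rw [div_two_im, this]
        norm_num
      have h3 : M⁻¹ ≤ u (z/2) := hM.2 ⟨z/2, hz2, rfl⟩
      have h4 := mul_le_mul_of_nonneg_left h3 hMpos.le
      rw [hMM] at h4
      simp only [hwdef]
      rw [h1]
      linarith
    · have h1 : u z = 0 := hfr z ⟨hz, h⟩
      have h2 : 0 ≤ u (z/2) := hA _ (hhalfcl z hzcl)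
      simp only [hwdef]
      rw [h1]
      have : 0 ≤ M * u (z/2) := mul_nonneg hMpos.le h2
      linarith
  have hfinal := nonneg_on_D0 hwcont hwmv hwB hwbd
  constructor
  · intro z hz
    have h2z : 2*z ∈ D0 := two_mem_D0 hz
    have := hfinal (2*z) (subset_closure h2z)
    simp only [hwdef] at this
    have he : (2*z)/2 = z := by ring
    rw [he] at this
    linarith
  · intro z hz
    have := hfinal z (subset_closure hz)
    simp only [hwdef] at this
    linarith


end
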